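/- Let f : {-1,1}^n → {-1,1} be ε-close to a decision tree T of size s (at most s leaves). Then for all p ∈ (0,1): NS_p(f) ≤ p·log₂ s + 2ε. -/

import Mathlib

open Finset

attribute [local instance] Classical.propDecidable

namespace DTR

noncomputable section

/-- ±1 real value of a Boolean. -/
def toR (b : Bool) : ℝ := if b then 1 else -1

/-- Average (expectation under the uniform distribution) of a real-valued
function on `{-1,1}^n` (encoded as `Fin n → Bool`). -/
def avg (n : ℕ) (g : (Fin n → Bool) → ℝ) : ℝ := (∑ x : Fin n → Bool, g x) / 2 ^ n

/-- Mean `E[f]` of a ±1-valued Boolean function. -/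
def mean (n : ℕ) (f : (Fin n → Bool) → Bool) : ℝ := avg n fun x => toR (f x)

/-- Sign of a real number, as ±1 (with sign(0) = 1). -/
def sgn (e : ℝ) : ℝ := if 0 ≤ e then 1 else -1

/-- Normalized Hamming distance `Pr_x[f(x) ≠ g(x)]` under the uniform distribution. -/
def distB (n : ℕ) (f g : (Fin n → Bool) → Bool) : ℝ :=
  avg n fun x => if f x = g x then 0 else 1

/-- The `p`-noisy copy of `x` determined by the rerandomization pattern `r`
(coordinates where `r i = true` are rerandomized) and fresh bits `z`. -/
def noisy (n : ℕ) (x r z : Fin n → Bool) : Fin n → Bool := fun i => if r i then z i else x i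

/-- Probability of the rerandomization pattern `r` at noise rate `p`. -/
def wt (n : ℕ) (p : ℝ) (r : Fin n → Bool) : ℝ := ∏ i : Fin n, (if r i then p else 1 - p)

/-- Noise sensitivity `NS_p(f) = Pr[f(x) ≠ f(y)]`, `x` uniform, `y` a `p`-noisy copy of `x`. -/
def NS (n : ℕ) (p : ℝ) (f : (Fin n → Bool) → Bool) : ℝ :=
  (∑ x : Fin n → Bool, ∑ r : Fin n → Bool, ∑ z : Fin n → Bool,
      wt n p r * (if f x = f (noisy n x r z) then 0 else 1)) / (2 ^ n * 2 ^ n)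

/-- Restriction `f_{x_i = b}` of `f`, fixing coordinate `i` to `b`. -/
def restr (n : ℕ) (f : (Fin n → Bool) → Bool) (i : Fin n) (b : Bool) :
    (Fin n → Bool) → Bool := fun x => f (Function.update x i b)

/-- `Score_i(f,p) = NS_p(f) − E_b[NS_p(f_{x_i=b})]`. -/
def score (n : ℕ) (p : ℝ) (f : (Fin n → Bool) → Bool) (i : Fin n) : ℝ :=
  NS n p f - (NS n p (restr n f i true) + NS n p (restr n f i false)) / 2

/-- Discrete derivative `D_i g(x) = (g(x^{i=1}) − g(x^{i=-1}))/2` of a real-valued function. -/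
def Dder (n : ℕ) (g : (Fin n → Bool) → ℝ) (i : Fin n) (x : Fin n → Bool) : ℝ :=
  (g (Function.update x i true) - g (Function.update x i false)) / 2

/-- `p`-smoothed version `f̃(x) = E_{y ∼_p x}[f(y)]` of a Boolean function `f`. -/
def smooth (n : ℕ) (p : ℝ) (f : (Fin n → Bool) → Bool) (x : Fin n → Bool) : ℝ :=
  (∑ r : Fin n → Bool, ∑ z : Fin n → Bool, wt n p r * toR (f (noisy n x r z))) / 2 ^ n

/-- Fourier coefficient `f̂(S) = E[f(x) · χ_S(x)]`. -/
def fourier (n : ℕ) (f : (Fin n → Bool) → Bool) (S : Finset (Fin n)) : ℝ :=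
  avg n fun x => toR (f x) * ∏ i ∈ S, toR (x i)

/-- Total influence `Inf(g) = Σ_i Pr[g(x) ≠ g(x^{⊕i})]`. -/
def totalInf (n : ℕ) (g : (Fin n → Bool) → Bool) : ℝ :=
  ∑ i : Fin n, avg n fun x => if g x = g (Function.update x i (!x i)) then 0 else 1

/-- Decision trees over `{-1,1}^n`. -/
inductive DTree (n : ℕ) where
  | leaf : Bool → DTree n
  | node : Fin n → DTree n → DTree n → DTree n

namespace DTree

def eval {n : ℕ} : DTree n → (Fin n → Bool) → Bool
  | .leaf b, _ => b
  | .node i l r, x => if x i then eval r x else eval l x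

/-- Number of leaves (the size of the tree). -/
def leaves {n : ℕ} : DTree n → ℕ
  | .leaf _ => 1
  | .node _ l r => leaves l + leaves r

/-- Depth of the leaf reached by input `x`. -/
def depthOn {n : ℕ} : DTree n → (Fin n → Bool) → ℕ
  | .leaf _, _ => 0
  | .node i l r, x => (if x i then depthOn r x else depthOn l x) + 1

/-- Whether the tree queries variable `i` on input `x`. -/
def queries {n : ℕ} : DTree n → (Fin n → Bool) → Fin n → Bool
  | .leaf _, _, _ => false
  | .node j l r, x, i => (i == j) || (if x j then queries r x i else queries l x i)

/-- The tree never re-queries a variable already queried on the path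
(given the set `s` of forbidden variables). -/
def noRepeat {n : ℕ} : DTree n → Finset (Fin n) → Prop
  | .leaf _, _ => True
  | .node i l r, s => i ∉ s ∧ noRepeat l (insert i s) ∧ noRepeat r (insert i s)

def depth {n : ℕ} : DTree n → ℕ
  | .leaf _ => 0
  | .node _ l r => max (depth l) (depth r) + 1

end DTree

/-- `opt_s(g)`: distance of `g` to the closest decision tree of size at most `s`. -/
def opt (n : ℕ) (s : ℕ) (g : (Fin n → Bool) → Bool) : ℝ :=
  sInf {e : ℝ | ∃ T : DTree n, T.leaves ≤ s ∧ distB n g T.eval = e}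

/-!
Two facts combine. First, `f ↦ NS_p(f)` is `2`-Lipschitz for the distance `Pr[f ≠ g]`: if
`f(x) ≠ f(y)` but `T(x) = T(y)`, then `f` and `T` disagree at `x` or at `y`, and both `x` and its
noisy copy `y` are uniform. Second, `T(x) ≠ T(y)` forces the noise to hit a variable on the path
of `x`, so by the union bound `NS_p(T) ≤ p · E[depth]`; once repeated queries are pruned, the leaf
at depth `d` is reached with probability `2⁻ᵈ`, and the expected depth is at most `log₂ s`.
-/

section Noise

variable {n : ℕ}

lemma sum_wt_mul_prod (p : ℝ) (g : Fin n → Bool → ℝ) :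
    ∑ r : Fin n → Bool, wt n p r * ∏ i, g i (r i)
      = ∏ i, (p * g i true + (1 - p) * g i false) := by
  have hb : ∀ i, p * g i true + (1 - p) * g i false
      = ∑ b : Bool, (if b then p else 1 - p) * g i b := by simp
  simp only [hb, Fintype.prod_sum, wt, ← prod_mul_distrib]

lemma sum_wt (p : ℝ) : ∑ r : Fin n → Bool, wt n p r = 1 := by
  simpa using sum_wt_mul_prod (n := n) p fun _ _ => 1

lemma sum_wt_mul_coord (p : ℝ) (i : Fin n) :
    ∑ r : Fin n → Bool, wt n p r * (if r i then 1 else 0) = p := by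
  have h := sum_wt_mul_prod p fun j b => if j = i then (if b then (1 : ℝ) else 0) else 1
  rw [prod_eq_single i (fun j _ hj => by simp [hj]) (by simp)] at h
  simpa [prod_ite_eq'] using h

lemma wt_nonneg {p : ℝ} (hp0 : 0 ≤ p) (hp1 : p ≤ 1) (r : Fin n → Bool) : 0 ≤ wt n p r :=
  prod_nonneg fun i _ => by split <;> linarith

-- `(x, z) ↦ (noisy x r z, noisy z r x)` swaps the coordinates in `r` and is an involution.
lemma sum_sum_noisy (r : Fin n → Bool) (g : (Fin n → Bool) → ℝ) :
    ∑ x : Fin n → Bool, ∑ z : Fin n → Bool, g (noisy n x r z)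
      = 2 ^ n * ∑ y : Fin n → Bool, g y := by
  have inv : Function.Involutive
      (fun q : (Fin n → Bool) × (Fin n → Bool) => (noisy n q.1 r q.2, noisy n q.2 r q.1)) := by
    rintro ⟨x, z⟩
    ext i <;> by_cases h : r i <;> simp [noisy, h]
  rw [← Fintype.sum_prod_type']
  calc _ = ∑ q : (Fin n → Bool) × (Fin n → Bool), g q.1 := Equiv.sum_comp inv.toPerm (g ·.1)
    _ = _ := by simp [Fintype.sum_prod_type, mul_sum, mul_comm]

end Noise

def noiseAvg (n : ℕ) (p : ℝ) (F : (Fin n → Bool) → (Fin n → Bool) → (Fin n → Bool) → ℝ) : ℝ :=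
  (∑ x : Fin n → Bool, ∑ r : Fin n → Bool, ∑ z : Fin n → Bool, wt n p r * F x r z)
    / (2 ^ n * 2 ^ n)

section NoiseAvg

variable {n : ℕ} {p : ℝ}

lemma NS_eq_noiseAvg (f : (Fin n → Bool) → Bool) :
    NS n p f = noiseAvg n p fun x r z => if f x = f (noisy n x r z) then 0 else 1 := rfl

lemma noiseAvg_mono (hp0 : 0 ≤ p) (hp1 : p ≤ 1)
    {F G : (Fin n → Bool) → (Fin n → Bool) → (Fin n → Bool) → ℝ}
    (h : ∀ x r z, F x r z ≤ G x r z) : noiseAvg n p F ≤ noiseAvg n p G := by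
  unfold noiseAvg
  gcongr with x _ r _ z _
  exacts [wt_nonneg hp0 hp1 r, h x r z]

lemma noiseAvg_add (F G : (Fin n → Bool) → (Fin n → Bool) → (Fin n → Bool) → ℝ) :
    noiseAvg n p (fun x r z => F x r z + G x r z) = noiseAvg n p F + noiseAvg n p G := by
  simp only [noiseAvg, mul_add, sum_add_distrib, add_div]

lemma noiseAvg_eq_avg_sum_wt (F : (Fin n → Bool) → (Fin n → Bool) → ℝ) :
    noiseAvg n p (fun x r _ => F x r) = avg n fun x => ∑ r : Fin n → Bool, wt n p r * F x r := by
  simp only [noiseAvg, avg, sum_const, card_univ, Fintype.card_pi, Fintype.card_bool, prod_const,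
    Fintype.card_fin, nsmul_eq_mul, ← mul_sum, sum_comm (γ := Fin n → Bool)]
  push_cast
  field_simp

lemma noiseAvg_fst (g : (Fin n → Bool) → ℝ) : noiseAvg n p (fun x _ _ => g x) = avg n g := by
  simp only [noiseAvg_eq_avg_sum_wt, ← sum_mul, sum_wt, one_mul]

lemma noiseAvg_noisy (g : (Fin n → Bool) → ℝ) :
    noiseAvg n p (fun x r z => g (noisy n x r z)) = avg n g := by
  unfold noiseAvg avg
  rw [sum_comm]
  simp only [← mul_sum, sum_sum_noisy, ← sum_mul, sum_wt, one_mul]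
  field_simp

lemma noiseAvg_sum_mul_coord (g : Fin n → (Fin n → Bool) → ℝ) :
    noiseAvg n p (fun x r _ => ∑ i, g i x * if r i then 1 else 0)
      = p * avg n fun x => ∑ i, g i x := by
  have hx : ∀ x, ∑ r : Fin n → Bool, wt n p r * (∑ i, g i x * if r i then 1 else 0)
      = p * ∑ i, g i x := fun x => calc
    _ = ∑ i, g i x * ∑ r : Fin n → Bool, wt n p r * (if r i then 1 else 0) := by
      simp only [mul_sum]
      rw [sum_comm]
      exact sum_congr rfl fun i _ => sum_congr rfl fun r _ => by ring
    _ = p * ∑ i, g i x := by simp only [sum_wt_mul_coord, mul_sum, mul_comm]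
  rw [noiseAvg_eq_avg_sum_wt, avg, avg]
  simp only [hx, ← mul_sum, mul_div_assoc]

end NoiseAvg

theorem NS_le_NS_add_two_mul_distB {n : ℕ} {p : ℝ} (hp0 : 0 ≤ p) (hp1 : p ≤ 1)
    (f g : (Fin n → Bool) → Bool) : NS n p f ≤ NS n p g + 2 * distB n f g := by
  set d : (Fin n → Bool) → ℝ := fun x => if f x = g x then 0 else 1
  have hpt : ∀ x y,
      (if f x = f y then (0 : ℝ) else 1) ≤ (if g x = g y then 0 else 1) + d x + d y := by
    grind
  calc NS n p f
      ≤ noiseAvg n p fun x r z =>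
          ((if g x = g (noisy n x r z) then 0 else 1) + d x) + d (noisy n x r z) :=
        noiseAvg_mono hp0 hp1 fun x r z => hpt x (noisy n x r z)
    _ = NS n p g + 2 * distB n f g := by
        rw [noiseAvg_add, noiseAvg_add, noiseAvg_fst, noiseAvg_noisy, ← NS_eq_noiseAvg]
        rw [show distB n f g = avg n d from rfl]
        ring

lemma logb_two_add_ge_avg_add_one {a b : ℝ} (ha : 0 < a) (hb : 0 < b) :
    (Real.logb 2 a + Real.logb 2 b) / 2 + 1 ≤ Real.logb 2 (a + b) := by
  have amgm : a * b ≤ ((a + b) / 2) ^ 2 := by nlinarith [sq_nonneg (a - b)]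
  have hmono := Real.logb_le_logb_of_le (b := 2) (by norm_num) (by positivity) amgm
  rw [Real.logb_mul ha.ne' hb.ne', Real.logb_pow, Real.logb_div (by positivity) two_ne_zero,
    Real.logb_self_eq_one one_lt_two] at hmono
  push_cast at hmono
  linarith

section Avg

variable {n : ℕ}

lemma avg_mono {g h : (Fin n → Bool) → ℝ} (hgh : ∀ x, g x ≤ h x) : avg n g ≤ avg n h :=
  div_le_div_of_nonneg_right (sum_le_sum fun x _ => hgh x) (by positivity)

lemma avg_add_const (g : (Fin n → Bool) → ℝ) (c : ℝ) : avg n (fun x => g x + c) = avg n g + c := by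
  simp only [avg, sum_add_distrib, sum_const, card_univ, Fintype.card_pi, Fintype.card_bool,
    prod_const, Fintype.card_fin, nsmul_eq_mul]
  push_cast
  field_simp

-- Flipping coordinate `i` is a measure-preserving involution exchanging `{x i}` and `{¬ x i}`.
lemma avg_ite_coord (i : Fin n) (G H : (Fin n → Bool) → ℝ)
    (hG : ∀ x b, G (Function.update x i b) = G x) (hH : ∀ x b, H (Function.update x i b) = H x) :
    avg n (fun x => if x i then G x else H x) = (avg n G + avg n H) / 2 := by
  have inv : Function.Involutive fun x : Fin n → Bool => Function.update x i (!x i) := by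
    intro x
    ext j
    by_cases h : j = i
    · subst h; simp
    · simp [Function.update_of_ne h]
  have hflip : ∑ x : Fin n → Bool, (if x i then G x else H x)
      = ∑ x : Fin n → Bool, (if x i then H x else G x) := by
    rw [← Equiv.sum_comp inv.toPerm]
    refine sum_congr rfl fun x _ => ?_
    simp only [Function.Involutive.coe_toPerm, Function.update_self, hG, hH]
    cases x i <;> rfl
  have hsum : ∑ x : Fin n → Bool, (if x i then G x else H x)
      + ∑ x : Fin n → Bool, (if x i then H x else G x) = ∑ x, G x + ∑ x, H x := by
    rw [← sum_add_distrib, ← sum_add_distrib]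
    exact sum_congr rfl fun x _ => by cases x i <;> simp [add_comm]
  simp only [avg]
  field_simp
  linarith

end Avg

namespace DTree

variable {n : ℕ}

lemma one_le_leaves (T : DTree n) : 1 ≤ T.leaves := by
  induction T with
  | leaf => rfl
  | node _ _ _ _ ihr => exact le_add_left ihr

lemma exists_queries_ne_of_eval_ne (T : DTree n) {x y : Fin n → Bool} (h : T.eval x ≠ T.eval y) :
    ∃ i, T.queries x i ∧ x i ≠ y i := by
  induction T with
  | leaf => exact absurd rfl h
  | node j l r ihl ihr =>
    by_cases hxy : x j = y j
    · simp only [eval, ← hxy] at h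
      cases hb : x j <;> simp only [hb] at h
      · obtain ⟨i, hq, hne⟩ := ihl h
        exact ⟨i, by simp [queries, hb, hq], hne⟩
      · obtain ⟨i, hq, hne⟩ := ihr h
        exact ⟨i, by simp [queries, hb, hq], hne⟩
    · exact ⟨j, by simp [queries], hxy⟩

lemma sum_queries_le_depthOn (T : DTree n) (x : Fin n → Bool) :
    ∑ i, (if T.queries x i then (1 : ℝ) else 0) ≤ T.depthOn x := by
  induction T with
  | leaf => simp [queries, depthOn]
  | node j l r ihl ihr =>
    have step : ∀ t : DTree n, ∑ i, (if t.queries x i then (1 : ℝ) else 0) ≤ t.depthOn x →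
        ∑ i, (if (i == j) || t.queries x i then (1 : ℝ) else 0) ≤ t.depthOn x + 1 := by
      intro t ht
      calc ∑ i, (if (i == j) || t.queries x i then (1 : ℝ) else 0)
          ≤ ∑ i, ((if i = j then 1 else 0) + if t.queries x i then 1 else 0) :=
            sum_le_sum fun i _ => by by_cases i = j <;> split_ifs <;> simp_all
        _ ≤ t.depthOn x + 1 := by
            rw [sum_add_distrib, sum_ite_eq' univ j]
            simp only [mem_univ, if_true]
            linarith
    cases hb : x j
    · simpa [queries, depthOn, hb] using step l ihl
    · simpa [queries, depthOn, hb] using step r ihr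

lemma depthOn_update_of_mem {T : DTree n} {s : Finset (Fin n)} (hT : T.noRepeat s) {i : Fin n}
    (hi : i ∈ s) (x : Fin n → Bool) (b : Bool) :
    T.depthOn (Function.update x i b) = T.depthOn x := by
  induction T generalizing s with
  | leaf => rfl
  | node j l r ihl ihr =>
    obtain ⟨hj, hl, hr⟩ := hT
    have hji : j ≠ i := fun h => hj (h ▸ hi)
    simp only [depthOn, Function.update_of_ne hji, ihl hl (mem_insert_of_mem hi),
      ihr hr (mem_insert_of_mem hi)]

-- Kraft's inequality in entropy form: without repeated queries every leaf at depth `d` is reached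
-- with probability `2⁻ᵈ`.
lemma avg_depthOn_le_logb_leaves {T : DTree n} {s : Finset (Fin n)} (hT : T.noRepeat s) :
    avg n (fun x => (T.depthOn x : ℝ)) ≤ Real.logb 2 T.leaves := by
  induction T generalizing s with
  | leaf => simp [avg, depthOn, leaves]
  | node i l r ihl ihr =>
    obtain ⟨-, hl, hr⟩ := hT
    have hsplit : avg n (fun x => ((node i l r).depthOn x : ℝ))
        = (avg n (fun x => (r.depthOn x : ℝ)) + avg n (fun x => (l.depthOn x : ℝ))) / 2 + 1 := by
      rw [← avg_ite_coord i _ _ (fun x b => by rw [depthOn_update_of_mem hr (mem_insert_self i s)])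
        (fun x b => by rw [depthOn_update_of_mem hl (mem_insert_self i s)]), ← avg_add_const]
      congr 1
      ext x
      cases h : x i <;> simp [depthOn, h]
    have hlogb := logb_two_add_ge_avg_add_one (a := r.leaves) (b := l.leaves)
      (by exact_mod_cast r.one_le_leaves) (by exact_mod_cast l.one_le_leaves)
    rw [hsplit, leaves, Nat.cast_add, add_comm (l.leaves : ℝ)]
    linarith [ihl hl, ihr hr]

/-- Removes repeated queries: `s` is the set of variables already queried on the path, and
`v` records the answers they received. -/
def prune : DTree n → Finset (Fin n) → (Fin n → Bool) → DTree n
  | .leaf b, _, _ => .leaf b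
  | .node i l r, s, v =>
    if i ∈ s then (if v i then prune r s v else prune l s v)
    else .node i (prune l (insert i s) (Function.update v i false))
                 (prune r (insert i s) (Function.update v i true))

lemma leaves_prune_le (T : DTree n) (s : Finset (Fin n)) (v : Fin n → Bool) :
    (T.prune s v).leaves ≤ T.leaves := by
  induction T generalizing s v with
  | leaf => rfl
  | node i l r ihl ihr =>
    unfold prune
    split_ifs
    · exact (ihr s v).trans (le_add_left le_rfl)
    · exact (ihl s v).trans (le_add_right le_rfl)
    · exact Nat.add_le_add (ihl _ _) (ihr _ _)

lemma noRepeat_prune (T : DTree n) (s : Finset (Fin n)) (v : Fin n → Bool) :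
    (T.prune s v).noRepeat s := by
  induction T generalizing s v with
  | leaf => trivial
  | node i l r ihl ihr =>
    unfold prune
    split_ifs with hi
    · exact ihr s v
    · exact ihl s v
    · exact ⟨hi, ihl _ _, ihr _ _⟩

lemma eval_prune (T : DTree n) {s : Finset (Fin n)} {v x : Fin n → Bool}
    (hx : ∀ j ∈ s, x j = v j) : (T.prune s v).eval x = T.eval x := by
  induction T generalizing s v with
  | leaf => rfl
  | node i l r ihl ihr =>
    have hx' : ∀ b, x i = b → ∀ j ∈ insert i s, x j = Function.update v i b j := by
      intro b hb j hj
      by_cases hji : j = i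
      · subst hji; simpa using hb
      · rw [Function.update_of_ne hji]; exact hx j ((mem_insert.mp hj).resolve_left hji)
    unfold prune
    by_cases hi : i ∈ s
    · cases hv : v i <;> simp [hi, hv, eval, hx i hi, ihl hx, ihr hx]
    · cases hb : x i <;> simp [hi, eval, hb, ihl (hx' _ hb), ihr (hx' _ hb)]

lemma exists_noRepeat_eval_eq (T : DTree n) :
    ∃ T' : DTree n, T'.noRepeat ∅ ∧ T'.eval = T.eval ∧ T'.leaves ≤ T.leaves :=
  ⟨T.prune ∅ fun _ => false, T.noRepeat_prune _ _,
    funext fun _ => T.eval_prune fun _ h => absurd h (notMem_empty _), T.leaves_prune_le _ _⟩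

end DTree

theorem NS_eval_le_mul_avg_depthOn {n : ℕ} {p : ℝ} (hp0 : 0 ≤ p) (hp1 : p ≤ 1) (T : DTree n) :
    NS n p T.eval ≤ p * avg n fun x => (T.depthOn x : ℝ) := by
  -- `T` can only change value if the noise rerandomizes a variable on the path of `x`.
  have hunion : ∀ x r z, (if T.eval x = T.eval (noisy n x r z) then (0 : ℝ) else 1)
      ≤ ∑ i, (if T.queries x i then (1 : ℝ) else 0) * if r i then 1 else 0 := by
    intro x r z
    have hnonneg : ∀ i, (0 : ℝ) ≤ (if T.queries x i then 1 else 0) * if r i then 1 else 0 :=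
      fun i => by split_ifs <;> norm_num
    split_ifs with h
    · exact sum_nonneg fun i _ => hnonneg i
    · obtain ⟨i, hq, hne⟩ := T.exists_queries_ne_of_eval_ne h
      have hr : r i = true := by
        by_contra hr
        simp [noisy, hr] at hne
      calc (1 : ℝ) = (if T.queries x i then 1 else 0) * if r i then 1 else 0 := by simp [hq, hr]
        _ ≤ _ := single_le_sum (fun j _ => hnonneg j) (mem_univ i)
  calc NS n p T.eval
      ≤ noiseAvg n p fun x r _ =>
          ∑ i, (if T.queries x i then (1 : ℝ) else 0) * if r i then 1 else 0 :=
        noiseAvg_mono hp0 hp1 hunion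
    _ = p * avg n fun x => ∑ i, if T.queries x i then (1 : ℝ) else 0 := noiseAvg_sum_mul_coord _
    _ ≤ p * avg n fun x => (T.depthOn x : ℝ) :=
        mul_le_mul_of_nonneg_left (avg_mono T.sum_queries_le_depthOn) hp0

/-- if `f` is `ε`-close to a decision tree with at most `s` leaves then
`NS_p(f) ≤ p·log₂ s + 2ε`. -/
theorem stmt13 (n s : ℕ) (p ε : ℝ) (hp0 : 0 < p) (hp1 : p < 1)
    (f : (Fin n → Bool) → Bool) (T : DTree n) (hs : T.leaves ≤ s)
    (hclose : distB n f T.eval ≤ ε) :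
    NS n p f ≤ p * Real.logb 2 s + 2 * ε := by
  obtain ⟨T', hT'rep, hT'eval, hT'leaves⟩ := T.exists_noRepeat_eval_eq
  have hpos : (0 : ℝ) < T'.leaves := by exact_mod_cast T'.one_le_leaves
  have hs' : (T'.leaves : ℝ) ≤ s := by exact_mod_cast hT'leaves.trans hs
  have hNS := NS_eval_le_mul_avg_depthOn hp0.le hp1.le T'
  rw [hT'eval] at hNS
  calc NS n p f ≤ NS n p T.eval + 2 * distB n f T.eval :=
        NS_le_NS_add_two_mul_distB hp0.le hp1.le f T.eval
    _ ≤ p * avg n (fun x => (T'.depthOn x : ℝ)) + 2 * ε := by linarith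
    _ ≤ p * Real.logb 2 T'.leaves + 2 * ε := by
        gcongr
        exact DTree.avg_depthOn_le_logb_leaves hT'rep
    _ ≤ p * Real.logb 2 s + 2 * ε := by
        gcongr
        norm_num

end

end DTR
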